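/- arXiv:2006.04023 — 2 statements merged into one kernel-verified Lean document; each statement's English description precedes it below -/
import Mathlib

section
/- A polynomial f on ℝⁿ is O(n)-invariant if and only if f is invariant under the subgroup SO(n) together with a single reflection; in particular for n ≥ 1, f is O(n)-invariant iff f(x) depends only on ‖x‖². -/
/-!
An orthogonal matrix of determinant `-1` is a rotation times the coordinate reflection
`diag(-1, 1, …, 1)`, which gives the first equivalence. Since `O(n)` acts transitively on each
sphere, an invariant function is determined by its values `q(t) = f(t e₀)` on one coordinate axis.
For a polynomial `f` this `q` is a one-variable polynomial, even by invariance under the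
reflection, hence `q(t) = p(t²)` and `f(x) = q(‖x‖) = p(‖x‖²)`. Conversely, orthogonal matrices
preserve `‖x‖²`.
-/

open MvPolynomial Matrix

section CoordReflection

variable {ι R : Type*} [Fintype ι] [DecidableEq ι] [CommRing R] (i₀ : ι)

abbrev coordReflection : Matrix ι ι R := diagonal fun i => if i = i₀ then -1 else 1

theorem coordReflection_mul_self :
    coordReflection i₀ * coordReflection i₀ = (1 : Matrix ι ι R) := by
  rw [diagonal_mul_diagonal, ← diagonal_one]
  congr 1
  funext i
  split_ifs <;> simp

theorem coordReflection_mem_orthogonalGroup : coordReflection i₀ ∈ orthogonalGroup ι R := by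
  rw [mem_orthogonalGroup_iff, diagonal_transpose, coordReflection_mul_self]

theorem det_coordReflection : (coordReflection i₀ : Matrix ι ι R).det = -1 := by
  simp [det_diagonal, Finset.prod_ite_eq']

theorem coordReflection_mulVec_single (t : R) :
    coordReflection i₀ *ᵥ Pi.single i₀ t = Pi.single i₀ (-t) := by
  funext i
  rw [mulVec_diagonal]
  by_cases hi : i = i₀ <;> simp [hi]

end CoordReflection

section Orthogonal

variable {ι : Type*} [Fintype ι] [DecidableEq ι]

theorem LinearIsometryEquiv.exists_orthogonalGroup_mulVec_eq
    (T : EuclideanSpace ℝ ι ≃ₗᵢ[ℝ] EuclideanSpace ℝ ι) :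
    ∃ g : orthogonalGroup ι ℝ, ∀ x : ι → ℝ,
      (g : Matrix ι ι ℝ) *ᵥ x = (T (WithLp.toLp 2 x)).ofLp := by
  let b := EuclideanSpace.basisFun ι ℝ
  refine ⟨⟨_, T.toMatrix_mem_unitaryGroup b b⟩, fun x => ?_⟩
  have hrepr (y : EuclideanSpace ℝ ι) : ⇑(b.toBasis.repr y) = y.ofLp :=
    funext (EuclideanSpace.basisFun_repr ι ℝ y)
  simpa [hrepr] using
    LinearMap.toMatrix_mulVec_repr b.toBasis b.toBasis T.toLinearEquiv.toLinearMap (WithLp.toLp 2 x)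

theorem exists_orthogonalGroup_mulVec_single_sqrt_eq (i₀ : ι) (x : ι → ℝ) :
    ∃ g : orthogonalGroup ι ℝ, (g : Matrix ι ι ℝ) *ᵥ Pi.single i₀ √(∑ i, x i ^ 2) = x := by
  set v := EuclideanSpace.single i₀ √(∑ i, x i ^ 2)
  have hnorm : ‖v‖ = ‖WithLp.toLp 2 x‖ := by simp [v, EuclideanSpace.norm_eq]
  obtain ⟨g, hg⟩ :=
    (Submodule.reflection (ℝ ∙ (v - WithLp.toLp 2 x))ᗮ).exists_orthogonalGroup_mulVec_eq
  refine ⟨g, ?_⟩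
  simpa [hg] using congrArg WithLp.ofLp (Submodule.reflection_sub hnorm)

theorem sum_sq_mulVec_of_mem_orthogonalGroup {g : Matrix ι ι ℝ} (hg : g ∈ orthogonalGroup ι ℝ)
    (x : ι → ℝ) : ∑ i, (g *ᵥ x) i ^ 2 = ∑ i, x i ^ 2 := by
  have h : gᵀ * g = 1 := (mem_orthogonalGroup_iff' ι ℝ).mp hg
  simp only [sq]
  change (g *ᵥ x) ⬝ᵥ (g *ᵥ x) = x ⬝ᵥ x
  rw [dotProduct_mulVec, ← mulVec_transpose, mulVec_mulVec, h, one_mulVec]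

def OrthogonalInvariant {α : Type*} (F : (ι → ℝ) → α) : Prop :=
  ∀ g : orthogonalGroup ι ℝ, ∀ x, F ((g : Matrix ι ι ℝ) *ᵥ x) = F x

variable {α : Type*} {F : (ι → ℝ) → α}

theorem orthogonalInvariant_iff_det_eq_one_and_coordReflection (i₀ : ι) :
    OrthogonalInvariant F ↔
      (∀ g : orthogonalGroup ι ℝ, (g : Matrix ι ι ℝ).det = 1 →
          ∀ x, F ((g : Matrix ι ι ℝ) *ᵥ x) = F x) ∧
        ∀ x, F (coordReflection i₀ *ᵥ x) = F x := by
  refine ⟨fun h => ⟨fun g _ => h g, h ⟨_, coordReflection_mem_orthogonalGroup i₀⟩⟩, ?_⟩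
  rintro ⟨hSO, hrefl⟩ g x
  have hdet_sq : (g : Matrix ι ι ℝ).det * (g : Matrix ι ι ℝ).det = 1 :=
    (det_of_mem_unitary g.2).1
  rcases mul_self_eq_one_iff.mp hdet_sq with hdet | hdet
  · exact hSO g hdet x
  · let D : orthogonalGroup ι ℝ := ⟨_, coordReflection_mem_orthogonalGroup i₀⟩
    have hgD : ((g * D : orthogonalGroup ι ℝ) : Matrix ι ι ℝ).det = 1 := by
      rw [Submonoid.coe_mul, det_mul, hdet, det_coordReflection, neg_mul_neg, one_mul]
    calc F ((g : Matrix ι ι ℝ) *ᵥ x)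
        = F (((g * D : orthogonalGroup ι ℝ) : Matrix ι ι ℝ) *ᵥ (coordReflection i₀ *ᵥ x)) := by
          rw [mulVec_mulVec, Submonoid.coe_mul, mul_assoc, coordReflection_mul_self, mul_one]
      _ = F (coordReflection i₀ *ᵥ x) := hSO _ hgD _
      _ = F x := hrefl x

theorem OrthogonalInvariant.apply_eq_apply_single_sqrt (hF : OrthogonalInvariant F) (i₀ : ι)
    (x : ι → ℝ) : F x = F (Pi.single i₀ √(∑ i, x i ^ 2)) := by
  obtain ⟨g, hg⟩ := exists_orthogonalGroup_mulVec_single_sqrt_eq i₀ x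
  calc F x = F ((g : Matrix ι ι ℝ) *ᵥ Pi.single i₀ √(∑ i, x i ^ 2)) := by rw [hg]
    _ = F (Pi.single i₀ √(∑ i, x i ^ 2)) := hF g _

theorem OrthogonalInvariant.apply_single_neg (hF : OrthogonalInvariant F) (i₀ : ι) (t : ℝ) :
    F (Pi.single i₀ (-t)) = F (Pi.single i₀ t) := by
  rw [← coordReflection_mulVec_single, hF ⟨_, coordReflection_mem_orthogonalGroup i₀⟩]

end Orthogonal

namespace Polynomial

theorem expand_contract_two_of_comp_neg_X {R : Type*} [CommRing R] [IsAddTorsionFree R]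
    {q : R[X]} (hq : q.comp (-X) = q) : expand R 2 (contract 2 q) = q := by
  ext n
  rw [coeff_expand two_pos, coeff_contract two_ne_zero]
  split_ifs with hn
  · rw [Nat.div_mul_cancel hn]
  · have hodd : Odd n := Nat.odd_iff.mpr (Nat.two_dvd_ne_zero.mp hn)
    have hcoeff := congrArg (coeff · n) hq
    simp only [← neg_one_mul (X : R[X]), ← C_1, ← C_neg, comp_C_mul_X_coeff, hodd.neg_one_pow,
      mul_neg_one] at hcoeff
    exact (neg_eq_self.mp hcoeff).symm

end Polynomial

theorem MvPolynomial.eval_aeval_single_X {ι R : Type*} [CommSemiring R] [DecidableEq ι] (i₀ : ι)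
    (f : MvPolynomial ι R) (t : R) :
    (aeval (Pi.single i₀ Polynomial.X) f).eval t = eval (Pi.single i₀ t) f := by
  have hsingle : (fun i => Polynomial.aeval t ((Pi.single i₀ Polynomial.X : ι → Polynomial R) i))
      = Pi.single i₀ t := by
    funext i
    rw [Pi.apply_single (fun _ => Polynomial.aeval t) (fun _ => map_zero _), Polynomial.aeval_X]
  rw [← Polynomial.coe_aeval_eq_eval, ← AlgHom.comp_apply, comp_aeval, hsingle]
  rfl

theorem OrthogonalInvariant.exists_polynomial_eval_sum_sq {ι : Type*} [Fintype ι] [DecidableEq ι]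
    [Nonempty ι] {f : MvPolynomial ι ℂ}
    (hf : OrthogonalInvariant fun x : ι → ℝ => eval (fun i => (x i : ℂ)) f) :
    ∃ p : Polynomial ℂ, ∀ x : ι → ℝ,
      eval (fun i => (x i : ℂ)) f = Polynomial.eval ((∑ i, x i ^ 2 : ℝ) : ℂ) p := by
  let i₀ : ι := Classical.arbitrary ι
  let q : Polynomial ℂ := aeval (Pi.single i₀ Polynomial.X) f
  have hq (t : ℝ) : q.eval (t : ℂ) = eval (fun i => ((Pi.single i₀ t : ι → ℝ) i : ℂ)) f := by
    rw [MvPolynomial.eval_aeval_single_X]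
    congr 2 with i
    exact (Pi.apply_single (fun _ => ((↑) : ℝ → ℂ)) (fun _ => Complex.ofReal_zero) i₀ t i).symm
  have hq_even : q.comp (-Polynomial.X) = q := by
    refine Polynomial.eq_of_infinite_eval_eq _ _
      ((Set.infinite_range_of_injective Complex.ofReal_injective).mono ?_)
    rintro _ ⟨t, rfl⟩
    simp only [Set.mem_ofPred_eq, Polynomial.eval_comp, Polynomial.eval_neg, Polynomial.eval_X,
      ← Complex.ofReal_neg, hq, hf.apply_single_neg]
  have hq_sq (t : ℂ) : q.eval t = (Polynomial.contract 2 q).eval (t ^ 2) := by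
    rw [← Polynomial.expand_eval, Polynomial.expand_contract_two_of_comp_neg_X hq_even]
  refine ⟨Polynomial.contract 2 q, fun x => ?_⟩
  rw [hf.apply_eq_apply_single_sqrt i₀ x, ← hq, hq_sq, ← Complex.ofReal_pow,
    Real.sq_sqrt (by positivity)]

/-- A polynomial on `ℝⁿ` (n ≥ 1) is `O(n)`-invariant iff it is invariant under
`SO(n)` together with the single reflection `diag(-1,1,…,1)`; and this holds
iff `f(x)` depends only on `‖x‖² = ∑ xᵢ²`, i.e. `f(x) = p(‖x‖²)` for a
one-variable polynomial `p`. -/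
theorem On_invariance_characterizations (n : ℕ) (hn : 0 < n)
    (f : MvPolynomial (Fin n) ℂ) :
    ((∀ g : Matrix.orthogonalGroup (Fin n) ℝ, ∀ x : Fin n → ℝ,
        eval (fun i => ((Matrix.mulVec (g : Matrix (Fin n) (Fin n) ℝ) x) i : ℂ)) f =
        eval (fun i => (x i : ℂ)) f) ↔
      ((∀ g : Matrix.orthogonalGroup (Fin n) ℝ,
          (g : Matrix (Fin n) (Fin n) ℝ).det = 1 → ∀ x : Fin n → ℝ,
          eval (fun i => ((Matrix.mulVec (g : Matrix (Fin n) (Fin n) ℝ) x) i : ℂ)) f =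
          eval (fun i => (x i : ℂ)) f) ∧
        (∀ x : Fin n → ℝ,
          eval (fun i => ((Matrix.mulVec
              (Matrix.diagonal fun i : Fin n => if i = ⟨0, hn⟩ then (-1 : ℝ) else 1) x) i : ℂ)) f =
          eval (fun i => (x i : ℂ)) f))) ∧
    ((∀ g : Matrix.orthogonalGroup (Fin n) ℝ, ∀ x : Fin n → ℝ,
        eval (fun i => ((Matrix.mulVec (g : Matrix (Fin n) (Fin n) ℝ) x) i : ℂ)) f =
        eval (fun i => (x i : ℂ)) f) ↔
      ∃ p : Polynomial ℂ, ∀ x : Fin n → ℝ,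
        eval (fun i => (x i : ℂ)) f = Polynomial.eval ((∑ i, x i ^ 2 : ℝ) : ℂ) p) := by
  refine ⟨orthogonalInvariant_iff_det_eq_one_and_coordReflection
    (F := fun x => eval (fun i => (x i : ℂ)) f) ⟨0, hn⟩, ?_⟩
  have : Nonempty (Fin n) := ⟨⟨0, hn⟩⟩
  refine ⟨OrthogonalInvariant.exists_polynomial_eval_sum_sq, ?_⟩
  rintro ⟨p, hp⟩ g x
  rw [hp, hp, sum_sq_mulVec_of_mem_orthogonalGroup g.2]
end

section
/- Every polynomial f on ℝⁿ (n ≥ 1) can be written uniquely as a finite sum f = ∑_{j≥0} q^j h_j where each h_j is a harmonic polynomial and q = ∑ x_i²; i.e., ℂ[ℝⁿ] = ⊕_{j≥0} q^j · ℋ[ℝⁿ] where ℋ[ℝⁿ] is the space of harmonic polynomials. -/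
open MvPolynomial

noncomputable def lap (n : ℕ) : MvPolynomial (Fin n) ℂ →ₗ[ℂ] MvPolynomial (Fin n) ℂ :=
  ∑ i : Fin n, ((pderiv i).toLinearMap ∘ₗ (pderiv i).toLinearMap)

/-!
Multiplication by `xᵢ` is adjoint to `∂ᵢ` for the positive definite Fischer inner product
`⟨p, r⟩ = ∑_α α! · conj(p_α) · r_α`, so multiplication by `q` is adjoint to `Δ`. Hence
`Δ(q g) = 0` gives `⟨q g, q g⟩ = ⟨g, Δ(q g)⟩ = 0`, i.e. `g = 0`: the map `g ↦ Δ(q g)` is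
injective, so bijective on each finite-dimensional space of polynomials of degree `≤ m`.
For existence pick `g` with `Δ(q g) = Δ f` and `deg g ≤ deg f - 2`; then `f - q g` is harmonic and
induction on the degree expands `g`. For uniqueness, applying `Δ` to `h₀ = -q · ∑ⱼ qʲ hⱼ₊₁`
shows `∑ⱼ qʲ hⱼ₊₁ = 0`, and we descend.
-/

open ComplexConjugate Nat

section Fischer

variable {σ : Type*}

def Finsupp.factorial (α : σ →₀ ℕ) : ℕ := α.prod fun _ k => k !

theorem Finsupp.factorial_pos (α : σ →₀ ℕ) : 0 < α.factorial :=
  Finset.prod_pos fun _ _ => Nat.factorial_pos _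

theorem Finsupp.factorial_add_single (α : σ →₀ ℕ) (i : σ) :
    (α + single i 1).factorial = (α i + 1) * α.factorial := by
  unfold Finsupp.factorial
  rw [← mul_prod_erase' _ i _ fun _ => factorial_zero,
    ← mul_prod_erase' α i _ fun _ => factorial_zero, erase_add, erase_single, add_zero,
    add_apply, single_eq_same, factorial_succ, mul_assoc]

noncomputable def fischer (p r : MvPolynomial σ ℂ) : ℂ :=
  ∑ α ∈ r.support, α.factorial * conj (coeff α p) * coeff α r

theorem fischer_eq_sum_of_support_subset (p : MvPolynomial σ ℂ) {r : MvPolynomial σ ℂ}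
    {s : Finset (σ →₀ ℕ)} (h : r.support ⊆ s) :
    fischer p r = ∑ α ∈ s, α.factorial * conj (coeff α p) * coeff α r :=
  Finset.sum_subset h fun α _ hα => by rw [notMem_support_iff.mp hα, mul_zero]

theorem fischer_add_right (p r₁ r₂ : MvPolynomial σ ℂ) :
    fischer p (r₁ + r₂) = fischer p r₁ + fischer p r₂ := by
  classical
  rw [fischer_eq_sum_of_support_subset p support_add,
    fischer_eq_sum_of_support_subset p (r := r₁) Finset.subset_union_left,
    fischer_eq_sum_of_support_subset p (r := r₂) Finset.subset_union_right,
    ← Finset.sum_add_distrib]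
  simp only [coeff_add, mul_add]

theorem fischer_sum_right {ι : Type*} (s : Finset ι) (p : MvPolynomial σ ℂ)
    (r : ι → MvPolynomial σ ℂ) : fischer p (∑ i ∈ s, r i) = ∑ i ∈ s, fischer p (r i) :=
  map_sum (AddMonoidHom.mk' (fischer p) (fischer_add_right p)) r s

theorem fischer_sum_left {ι : Type*} (s : Finset ι) (p : ι → MvPolynomial σ ℂ)
    (r : MvPolynomial σ ℂ) : fischer (∑ i ∈ s, p i) r = ∑ i ∈ s, fischer (p i) r := by
  simp only [fischer, coeff_sum, map_sum, Finset.mul_sum, Finset.sum_mul]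
  exact Finset.sum_comm

theorem fischer_zero_right (p : MvPolynomial σ ℂ) : fischer p 0 = 0 := by
  simp [fischer]

theorem fischer_monomial_right (p : MvPolynomial σ ℂ) (α : σ →₀ ℕ) (c : ℂ) :
    fischer p (monomial α c) = α.factorial * conj (coeff α p) * c := by
  classical
  rw [fischer_eq_sum_of_support_subset p support_monomial_subset, Finset.sum_singleton,
    coeff_monomial, if_pos rfl]

theorem fischer_X_mul (i : σ) (p r : MvPolynomial σ ℂ) :
    fischer (X i * p) r = fischer p (pderiv i r) := by
  classical
  induction r using MvPolynomial.induction_on' with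
  | monomial γ c =>
    rw [pderiv_monomial, fischer_monomial_right, fischer_monomial_right]
    by_cases hγ : γ i = 0
    · rw [hγ, coeff_X_mul', if_neg (by simpa using hγ)]
      simp
    · obtain ⟨β, rfl⟩ : ∃ β, γ = β + Finsupp.single i 1 :=
        ⟨γ - Finsupp.single i 1, (tsub_add_cancel_of_le (Finsupp.single_le_iff.mpr
          (Nat.one_le_iff_ne_zero.mpr hγ))).symm⟩
      rw [mul_comm (X i), coeff_mul_X, add_tsub_cancel_right, Finsupp.factorial_add_single]
      simp only [cast_mul, cast_add, cast_one, Finsupp.coe_add, Pi.add_apply,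
        Finsupp.single_eq_same]
      ring
  | add r₁ r₂ h₁ h₂ => rw [map_add, fischer_add_right, fischer_add_right, h₁, h₂]

theorem fischer_sum_sq_mul [Fintype σ] (p r : MvPolynomial σ ℂ) :
    fischer ((∑ i, X i ^ 2) * p) r = fischer p (∑ i, pderiv i (pderiv i r)) := by
  rw [Finset.sum_mul, fischer_sum_left, fischer_sum_right]
  simp only [pow_two, mul_assoc, fischer_X_mul]

theorem fischer_self (p : MvPolynomial σ ℂ) :
    fischer p p = ((∑ α ∈ p.support, α.factorial * ‖coeff α p‖ ^ 2 : ℝ) : ℂ) := by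
  push_cast
  simp only [fischer, mul_assoc, Complex.conj_mul']

theorem eq_zero_of_fischer_self_eq_zero {p : MvPolynomial σ ℂ} (h : fischer p p = 0) : p = 0 := by
  rw [fischer_self, Complex.ofReal_eq_zero,
    Finset.sum_eq_zero_iff_of_nonneg fun _ _ => by positivity] at h
  ext α
  by_contra hα
  rw [coeff_zero] at hα
  simpa [hα, (Finsupp.factorial_pos α).ne'] using h α (mem_support_iff.mpr hα)

end Fischer

section Laplacian

variable {n : ℕ}

theorem lap_apply (f : MvPolynomial (Fin n) ℂ) : lap n f = ∑ i, pderiv i (pderiv i f) := by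
  simp [lap, LinearMap.sum_apply]

theorem sum_sq_ne_zero {σ : Type*} [Fintype σ] [Nonempty σ] :
    (∑ i : σ, X i ^ 2 : MvPolynomial σ ℂ) ≠ 0 := by
  intro h
  simpa using congrArg (eval fun _ => 1) h

theorem totalDegree_sum_sq_mul_le {σ R : Type*} [Fintype σ] [CommSemiring R] [Nontrivial R]
    (g : MvPolynomial σ R) : ((∑ i, X i ^ 2) * g).totalDegree ≤ g.totalDegree + 2 := by
  have hq : (∑ i : σ, X i ^ 2 : MvPolynomial σ R).totalDegree ≤ 2 :=
    (totalDegree_finsetSum _ _).trans <| Finset.sup_le fun i _ => (totalDegree_X_pow i 2).le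
  grw [totalDegree_mul, hq, add_comm]

theorem add_single_mem_support_of_mem_support_pderiv {σ R : Type*} [CommSemiring R] {i : σ}
    {f : MvPolynomial σ R} {d : σ →₀ ℕ} (h : d ∈ (pderiv i f).support) :
    d + Finsupp.single i 1 ∈ f.support := by
  rw [mem_support_iff, coeff_pderiv] at h
  exact mem_support_iff.mpr (left_ne_zero_of_mul h)

theorem degree_add_two_le_of_mem_support_lap {f : MvPolynomial (Fin n) ℂ} {d : Fin n →₀ ℕ}
    (h : d ∈ (lap n f).support) : d.degree + 2 ≤ f.totalDegree := by
  rw [lap_apply, mem_support_iff, coeff_sum] at h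
  obtain ⟨i, -, hi⟩ := Finset.exists_ne_zero_of_sum_ne_zero h
  have : (d + Finsupp.single i 1 + Finsupp.single i 1).degree ≤ f.totalDegree :=
    le_totalDegree (add_single_mem_support_of_mem_support_pderiv
      (add_single_mem_support_of_mem_support_pderiv (mem_support_iff.mpr hi)))
  rwa [map_add, map_add, Finsupp.degree_single, add_assoc] at this

theorem totalDegree_lap_le (f : MvPolynomial (Fin n) ℂ) :
    (lap n f).totalDegree ≤ f.totalDegree - 2 :=
  Finset.sup_le fun d hd => by
    have := degree_add_two_le_of_mem_support_lap hd
    change d.degree ≤ _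
    omega

theorem lap_eq_zero_of_totalDegree_lt_two {f : MvPolynomial (Fin n) ℂ} (hf : f.totalDegree < 2) :
    lap n f = 0 := by
  rw [← support_eq_empty]
  exact Finset.eq_empty_of_forall_notMem fun d hd => by
    have := degree_add_two_le_of_mem_support_lap hd
    omega

end Laplacian

section Decomposition

variable {n : ℕ} [NeZero n]

theorem eq_zero_of_lap_sum_sq_mul_eq_zero {g : MvPolynomial (Fin n) ℂ}
    (h : lap n ((∑ i, X i ^ 2) * g) = 0) : g = 0 := by
  have hqg : (∑ i, X i ^ 2) * g = 0 := eq_zero_of_fischer_self_eq_zero <| by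
    rw [fischer_sum_sq_mul, ← lap_apply, h, fischer_zero_right]
  exact (mul_eq_zero.mp hqg).resolve_left sum_sq_ne_zero

theorem exists_lap_sum_sq_mul_eq (r : MvPolynomial (Fin n) ℂ) :
    ∃ g, g.totalDegree ≤ r.totalDegree ∧ lap n ((∑ i, X i ^ 2) * g) = r := by
  let V := restrictTotalDegree (Fin n) ℂ r.totalDegree
  have hV : ∀ g ∈ V, lap n ((∑ i, X i ^ 2) * g) ∈ V := by
    intro g hg
    rw [mem_restrictTotalDegree] at hg ⊢
    have := totalDegree_lap_le ((∑ i, X i ^ 2) * g)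
    have := totalDegree_sum_sq_mul_le g
    omega
  let T : V →ₗ[ℂ] V := (lap n ∘ₗ LinearMap.mulLeft ℂ (∑ i, X i ^ 2)).restrict hV
  have hT : Function.Injective T := (injective_iff_map_eq_zero T).mpr fun g hg =>
    Subtype.ext (eq_zero_of_lap_sum_sq_mul_eq_zero (congrArg Subtype.val hg))
  obtain ⟨g, hg⟩ := LinearMap.injective_iff_surjective.mp hT
    ⟨r, (mem_restrictTotalDegree _ _ _).mpr le_rfl⟩
  exact ⟨g, (mem_restrictTotalDegree _ _ _).mp g.2, congrArg Subtype.val hg⟩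

theorem exists_harmonic_add_sum_sq_mul (f : MvPolynomial (Fin n) ℂ) :
    ∃ h g, lap n h = 0 ∧ f = h + (∑ i, X i ^ 2) * g ∧
      (g = 0 ∨ g.totalDegree + 2 ≤ f.totalDegree) := by
  by_cases hf : f.totalDegree < 2
  · exact ⟨f, 0, lap_eq_zero_of_totalDegree_lt_two hf, by rw [mul_zero, add_zero], .inl rfl⟩
  obtain ⟨g, hg_deg, hg⟩ := exists_lap_sum_sq_mul_eq (lap n f)
  refine ⟨f - (∑ i, X i ^ 2) * g, g, by rw [map_sub, hg, sub_self], by ring, .inr ?_⟩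
  have := totalDegree_lap_le f
  omega

-- A family `(hⱼ)` is handled as the polynomial `∑ⱼ hⱼ Tʲ` over `ℂ[x]`, whose value at `q` is
-- `∑ⱼ qʲ hⱼ`; `Polynomial.divX` then supplies the shift `(hⱼ)ⱼ ↦ (hⱼ₊₁)ⱼ`.
theorem exists_harmonic_expansion (f : MvPolynomial (Fin n) ℂ) :
    ∃ p : Polynomial (MvPolynomial (Fin n) ℂ),
      (∀ j, lap n (p.coeff j) = 0) ∧ p.eval (∑ i, X i ^ 2) = f := by
  induction hd : f.totalDegree using Nat.strong_induction_on generalizing f with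
  | _ d ih =>
    obtain ⟨h, g, hh, rfl, rfl | hg⟩ := exists_harmonic_add_sum_sq_mul f
    · refine ⟨Polynomial.C h, fun j => ?_, by simp⟩
      rw [Polynomial.coeff_C]
      split_ifs
      exacts [hh, map_zero _]
    · obtain ⟨p, hp, rfl⟩ := ih _ (by omega) g rfl
      refine ⟨Polynomial.C h + Polynomial.X * p, fun j => ?_, by simp⟩
      cases j with
      | zero => simpa using hh
      | succ j => simpa using hp j

theorem eq_zero_of_eval_sum_sq_eq_zero (p : Polynomial (MvPolynomial (Fin n) ℂ))
    (hp : ∀ j, lap n (p.coeff j) = 0) (h : p.eval (∑ i, X i ^ 2) = 0) : p = 0 := by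
  induction p using Polynomial.degree_lt_wf.induction with
  | _ p ih =>
    by_contra hp0
    have hsplit := Polynomial.X_mul_divX_add p
    have h' := congrArg (Polynomial.eval (∑ i, X i ^ 2)) hsplit
    rw [Polynomial.eval_add, Polynomial.eval_mul, Polynomial.eval_X, Polynomial.eval_C, h] at h'
    have hdiv_eval : p.divX.eval (∑ i, X i ^ 2) = 0 := eq_zero_of_lap_sum_sq_mul_eq_zero <| by
      rw [eq_neg_of_add_eq_zero_left h', map_neg, hp 0, neg_zero]
    have hdiv : p.divX = 0 := ih _ (Polynomial.degree_divX_lt hp0)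
      (fun j => by rw [Polynomial.coeff_divX]; exact hp _) hdiv_eval
    have hcoeff : p.coeff 0 = 0 := by rwa [hdiv_eval, mul_zero, zero_add] at h'
    exact hp0 (by rw [← hsplit, hdiv, hcoeff]; simp)

end Decomposition

theorem Polynomial.eval_eq_sum_toFinsupp {R : Type*} [CommSemiring R] (p : Polynomial R) (x : R) :
    p.eval x = p.toFinsupp.coeff.sum fun j c => x ^ j * c := by
  rw [Polynomial.eval_eq_sum, Polynomial.sum_def, Finsupp.sum, Polynomial.support_toFinsupp]
  simp [Polynomial.toFinsupp_apply, mul_comm]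

/-- Every polynomial `f` on `ℝⁿ` (`n ≥ 1`) is uniquely a finite sum
`f = ∑ⱼ qʲ hⱼ` with each `hⱼ` harmonic, where `q = ∑ xᵢ²`;
i.e. `ℂ[ℝⁿ] = ⊕ⱼ qʲ·ℋ[ℝⁿ]`. -/
theorem harmonic_decomposition (n : ℕ) (hn : 1 ≤ n) (f : MvPolynomial (Fin n) ℂ) :
    ∃! h : ℕ →₀ MvPolynomial (Fin n) ℂ,
      (∀ j, lap n (h j) = 0) ∧
      f = h.sum fun j hj => (∑ i : Fin n, X i ^ 2) ^ j * hj := by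
  have : NeZero n := ⟨by omega⟩
  obtain ⟨p, hp, rfl⟩ := exists_harmonic_expansion f
  refine ⟨p.toFinsupp.coeff, ⟨fun j => by rw [Polynomial.toFinsupp_apply]; exact hp j,
    Polynomial.eval_eq_sum_toFinsupp p _⟩, ?_⟩
  rintro h ⟨hh, hhp⟩
  let p' : Polynomial (MvPolynomial (Fin n) ℂ) := ⟨⟨h⟩⟩
  have : p' - p = 0 := eq_zero_of_eval_sum_sq_eq_zero _ (fun j => by
      rw [Polynomial.coeff_sub, map_sub, hp, sub_zero]; exact hh j)
    (by rw [Polynomial.eval_sub, hhp, Polynomial.eval_eq_sum_toFinsupp]; exact sub_self _)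
  rw [← sub_eq_zero.mp this]
end
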